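/- (Gauge reduction of the general system to the A = 0 system.) Let D ⊆ ℂ be open, let A, B, Ψ, g : D → Matrix (Fin N) (Fin N) ℂ be real-differentiable, and assume on D: ∂_z̄ Ψ + A·Ψ + B·conj(Ψ) = 0, ∂_z̄ g + A·g = 0, and g(z) is invertible for every z ∈ D. Define Ψ̃ = g⁻¹·Ψ and B̃ = g⁻¹·B·conj(g). Then ∂_z̄ Ψ̃ + B̃·conj(Ψ̃) = 0 on D. -/

import Mathlib

open Complex Matrix

/-- Entrywise Wirtinger derivative ∂_z f = (1/2)(∂f/∂x − i ∂f/∂y). -/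
noncomputable def wDz {N : ℕ} (f : ℂ → Matrix (Fin N) (Fin N) ℂ) (z : ℂ) :
    Matrix (Fin N) (Fin N) ℂ :=
  Matrix.of fun i j =>
    (1 / 2 : ℂ) * (fderiv ℝ (fun w => f w i j) z 1
      - Complex.I * fderiv ℝ (fun w => f w i j) z Complex.I)

/-- Entrywise Wirtinger derivative ∂_z̄ f = (1/2)(∂f/∂x + i ∂f/∂y). -/
noncomputable def wDzbar {N : ℕ} (f : ℂ → Matrix (Fin N) (Fin N) ℂ) (z : ℂ) :
    Matrix (Fin N) (Fin N) ℂ :=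
  Matrix.of fun i j =>
    (1 / 2 : ℂ) * (fderiv ℝ (fun w => f w i j) z 1
      + Complex.I * fderiv ℝ (fun w => f w i j) z Complex.I)

/-- Real-differentiability, entrywise, at every point of `D`. -/
def MatDiffOn {N : ℕ} (f : ℂ → Matrix (Fin N) (Fin N) ℂ) (D : Set ℂ) : Prop :=
  ∀ z ∈ D, ∀ i j, DifferentiableAt ℝ (fun w => f w i j) z

/-- Entrywise complex conjugate of a matrix. -/
def mconj {N : ℕ} (M : Matrix (Fin N) (Fin N) ℂ) : Matrix (Fin N) (Fin N) ℂ :=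
  M.map (starRingEnd ℂ)

/-! The gauge `g` absorbs `A`: since `g * g⁻¹ = 1` near `z`, the Leibniz rule gives
`∂̄(g⁻¹) = -g⁻¹ (∂̄g) g⁻¹ = g⁻¹ A`, hence `∂̄(g⁻¹ Ψ) = g⁻¹ A Ψ - g⁻¹ (A Ψ + B conj Ψ) = -g⁻¹ B conj Ψ`.
Conjugation is multiplicative, so `conj g` cancels against `conj g⁻¹` and the right-hand side
is exactly `-B̃ conj Ψ̃`. -/

open Filter Topology

namespace Matrix

variable {𝕜 E : Type*} [NontriviallyNormedField 𝕜] [NormedAddCommGroup E] [NormedSpace 𝕜 E]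
  {n : Type*} [Fintype n] [DecidableEq n] {z : E}

theorem differentiableAt_det {R : Type*} [NormedCommRing R] [NormedAlgebra 𝕜 R]
    {f : E → Matrix n n R} (hf : ∀ i j, DifferentiableAt 𝕜 (fun w => f w i j) z) :
    DifferentiableAt 𝕜 (fun w => (f w).det) z := by
  simp only [det_apply']
  refine DifferentiableAt.fun_sum fun σ _ => DifferentiableAt.const_mul ?_ _
  exact (HasFDerivAt.finsetProd fun i _ => (hf (σ i) i).hasFDerivAt).differentiableAt

theorem differentiableAt_adjugate_apply {R : Type*} [NormedCommRing R] [NormedAlgebra 𝕜 R]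
    {f : E → Matrix n n R} (hf : ∀ i j, DifferentiableAt 𝕜 (fun w => f w i j) z) (i j : n) :
    DifferentiableAt 𝕜 (fun w => (f w).adjugate i j) z := by
  simp only [adjugate_apply]
  refine differentiableAt_det fun k l => ?_
  by_cases hk : k = j
  · simp [hk]
  · simpa [hk] using hf k l

theorem differentiableAt_inv_apply {K : Type*} [NormedField K] [NormedAlgebra 𝕜 K]
    [CompleteSpace K] {f : E → Matrix n n K}
    (hf : ∀ i j, DifferentiableAt 𝕜 (fun w => f w i j) z) (hz : IsUnit (f z)) (i j : n) :
    DifferentiableAt 𝕜 (fun w => (f w)⁻¹ i j) z := by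
  have hdet : (f z).det ≠ 0 := ((isUnit_iff_isUnit_det _).mp hz).ne_zero
  simp only [inv_def, Ring.inverse_eq_inv, smul_apply, smul_eq_mul]
  exact ((differentiableAt_det hf).inv hdet).mul (differentiableAt_adjugate_apply hf i j)

end Matrix

noncomputable def dzbar (u : ℂ → ℂ) (z : ℂ) : ℂ :=
  (1 / 2 : ℂ) * (fderiv ℝ u z 1 + I * fderiv ℝ u z I)

theorem Filter.EventuallyEq.dzbar_eq {u v : ℂ → ℂ} {z : ℂ} (h : u =ᶠ[𝓝 z] v) :
    dzbar u z = dzbar v z := by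
  rw [dzbar, dzbar, h.fderiv_eq]

theorem dzbar_const (c z : ℂ) : dzbar (fun _ => c) z = 0 := by
  simp [dzbar]

theorem dzbar_mul {u v : ℂ → ℂ} {z : ℂ} (hu : DifferentiableAt ℝ u z)
    (hv : DifferentiableAt ℝ v z) :
    dzbar (fun w => u w * v w) z = dzbar u z * v z + u z * dzbar v z := by
  simp only [dzbar, fderiv_fun_mul hu hv, _root_.add_apply, _root_.smul_apply, smul_eq_mul]
  ring

theorem dzbar_sum {ι : Type*} (s : Finset ι) {u : ι → ℂ → ℂ} {z : ℂ}
    (hu : ∀ i ∈ s, DifferentiableAt ℝ (u i) z) :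
    dzbar (fun w => ∑ i ∈ s, u i w) z = ∑ i ∈ s, dzbar (u i) z := by
  simp only [dzbar, fderiv_fun_sum hu, _root_.sum_apply, Finset.mul_sum,
    ← Finset.sum_add_distrib, mul_add]

section Wirtinger

variable {N : ℕ} {f h : ℂ → Matrix (Fin N) (Fin N) ℂ} {z : ℂ}

theorem wDzbar_apply (f : ℂ → Matrix (Fin N) (Fin N) ℂ) (z : ℂ) (i j : Fin N) :
    wDzbar f z i j = dzbar (fun w => f w i j) z := rfl

theorem Filter.EventuallyEq.wDzbar_eq (hfh : f =ᶠ[𝓝 z] h) : wDzbar f z = wDzbar h z := by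
  ext i j
  exact Filter.EventuallyEq.dzbar_eq (hfh.mono fun w hw => congrFun (congrFun hw i) j)

theorem wDzbar_const (M : Matrix (Fin N) (Fin N) ℂ) (z : ℂ) : wDzbar (fun _ => M) z = 0 := by
  ext i j
  exact dzbar_const _ z

theorem wDzbar_mul (hf : ∀ i j, DifferentiableAt ℝ (fun w => f w i j) z)
    (hh : ∀ i j, DifferentiableAt ℝ (fun w => h w i j) z) :
    wDzbar (fun w => f w * h w) z = wDzbar f z * h z + f z * wDzbar h z := by
  ext i j
  simp only [wDzbar_apply, mul_apply, Matrix.add_apply]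
  rw [dzbar_sum _ fun k _ => (hf i k).fun_mul (hh k j), ← Finset.sum_add_distrib]
  exact Finset.sum_congr rfl fun k _ => dzbar_mul (hf i k) (hh k j)

theorem wDzbar_inv (hf : ∀ i j, DifferentiableAt ℝ (fun w => f w i j) z)
    (hunit : ∀ᶠ w in 𝓝 z, IsUnit (f w)) :
    wDzbar (fun w => (f w)⁻¹) z = -((f z)⁻¹ * wDzbar f z * (f z)⁻¹) := by
  have hdet : IsUnit (f z).det := (isUnit_iff_isUnit_det _).mp hunit.self_of_nhds
  have hone : (fun w => f w * (f w)⁻¹) =ᶠ[𝓝 z] fun _ => 1 :=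
    hunit.mono fun w hw => mul_nonsing_inv _ ((isUnit_iff_isUnit_det _).mp hw)
  have hleibniz : wDzbar f z * (f z)⁻¹ + f z * wDzbar (fun w => (f w)⁻¹) z = 0 := by
    rw [← wDzbar_mul hf (differentiableAt_inv_apply hf hunit.self_of_nhds), hone.wDzbar_eq,
      wDzbar_const]
  calc wDzbar (fun w => (f w)⁻¹) z
      = (f z)⁻¹ * (f z * wDzbar (fun w => (f w)⁻¹) z) := by
        rw [← Matrix.mul_assoc, nonsing_inv_mul _ hdet, Matrix.one_mul]
    _ = -((f z)⁻¹ * wDzbar f z * (f z)⁻¹) := by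
        rw [eq_neg_of_add_eq_zero_right hleibniz, Matrix.mul_neg, Matrix.mul_assoc]

end Wirtinger

theorem mconj_mul {N : ℕ} (M P : Matrix (Fin N) (Fin N) ℂ) :
    mconj (M * P) = mconj M * mconj P :=
  Matrix.map_mul

theorem mconj_one {N : ℕ} : mconj (1 : Matrix (Fin N) (Fin N) ℂ) = 1 := by
  simp [mconj]

theorem gauge_reduction_general {N : ℕ} (D : Set ℂ) (hD : IsOpen D)
    (A B Ψ g : ℂ → Matrix (Fin N) (Fin N) ℂ)
    (hΨ : MatDiffOn Ψ D) (hg : MatDiffOn g D)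
    (hΨsys : ∀ z ∈ D, wDzbar Ψ z + A z * Ψ z + B z * mconj (Ψ z) = 0)
    (hgsys : ∀ z ∈ D, wDzbar g z + A z * g z = 0)
    (hginv : ∀ z ∈ D, IsUnit (g z)) :
    ∀ z ∈ D,
      wDzbar (fun w => (g w)⁻¹ * Ψ w) z
        + ((g z)⁻¹ * B z * mconj (g z)) * mconj ((g z)⁻¹ * Ψ z) = 0 := by
  intro z hz
  have hdet : IsUnit (g z).det := (isUnit_iff_isUnit_det _).mp (hginv z hz)
  have hDΨ : wDzbar Ψ z = -(A z * Ψ z + B z * mconj (Ψ z)) :=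
    eq_neg_of_add_eq_zero_left (by rw [← add_assoc]; exact hΨsys z hz)
  have hDginv : wDzbar (fun w => (g w)⁻¹) z = (g z)⁻¹ * A z := by
    rw [wDzbar_inv (hg z hz) (eventually_of_mem (hD.mem_nhds hz) hginv),
      eq_neg_of_add_eq_zero_left (hgsys z hz), Matrix.mul_neg, Matrix.neg_mul, neg_neg,
      Matrix.mul_assoc, Matrix.mul_assoc, mul_nonsing_inv _ hdet, Matrix.mul_one]
  have hgauge : (g z)⁻¹ * B z * mconj (g z) * mconj ((g z)⁻¹ * Ψ z)
      = (g z)⁻¹ * (B z * mconj (Ψ z)) := by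
    rw [mconj_mul, Matrix.mul_assoc, ← Matrix.mul_assoc (mconj (g z)), ← mconj_mul,
      mul_nonsing_inv _ hdet, mconj_one, Matrix.one_mul, Matrix.mul_assoc]
  rw [wDzbar_mul (differentiableAt_inv_apply (hg z hz) (hginv z hz)) (hΨ z hz), hDginv, hDΨ,
    hgauge]
  noncomm_ring

/-- gauge reduction: if ∂_z̄ Ψ + A·Ψ + B·conj Ψ = 0, ∂_z̄ g + A·g = 0
and g is invertible on D, then Ψ̃ = g⁻¹·Ψ satisfies ∂_z̄ Ψ̃ + B̃·conj Ψ̃ = 0 with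
B̃ = g⁻¹·B·conj g. -/
theorem gauge_reduction {N : ℕ} (D : Set ℂ) (hD : IsOpen D)
    (A B Ψ g : ℂ → Matrix (Fin N) (Fin N) ℂ)
    (hA : MatDiffOn A D) (hB : MatDiffOn B D) (hΨ : MatDiffOn Ψ D) (hg : MatDiffOn g D)
    (hΨsys : ∀ z ∈ D, wDzbar Ψ z + A z * Ψ z + B z * mconj (Ψ z) = 0)
    (hgsys : ∀ z ∈ D, wDzbar g z + A z * g z = 0)
    (hginv : ∀ z ∈ D, IsUnit (g z)) :
    ∀ z ∈ D,
      wDzbar (fun w => (g w)⁻¹ * Ψ w) z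
        + ((g z)⁻¹ * B z * mconj (g z)) * mconj ((g z)⁻¹ * Ψ z) = 0 :=
  gauge_reduction_general D hD A B Ψ g hΨ hg hΨsys hgsys hginv
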